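/- Let a, b, c ∈ ℂ with {a^k b^l : k, l ∈ ℕ} dense in ℂ and |c| > 1. Let T_1, T_2 be the continuous linear operators on ℓ^∞(ℕ) over ℂ defined coordinatewise by T_1(x_1, x_2, x_3, …) = (a x_1, c x_2, c x_3, …) and T_2(x_1, x_2, x_3, …) = (b x_1, c x_2, c x_3, …). Then: (i) {x ∈ ℓ^∞(ℕ) : J_{(T_1,T_2)}(x) = ℓ^∞(ℕ)} = {(x_1, 0, 0, …) : x_1 ∈ ℂ}; in particular the pair (T_1, T_2) is locally topologically transitive; and (ii) the pair (T_1, T_2) is not topologically transitive, i.e. there exist non-empty open sets U, V ⊆ ℓ^∞(ℕ) such that T_1^k T_2^l (U) ∩ V = ∅ for all k, l ∈ ℕ∪{0}. -/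

import Mathlib

open Filter Topology ENNReal

instance : Fact ((1 : ℝ≥0∞) ≤ ⊤) := ⟨le_top⟩

/-- The extended limit set `J_{(T₁,T₂)}(x)` of a pair of continuous linear operators on a
complex normed space. -/
def JSetPairOp {X : Type*} [NormedAddCommGroup X] [NormedSpace ℂ X]
    (T₁ T₂ : X →L[ℂ] X) (x : X) : Set X :=
  {y | ∃ (u : ℕ → X) (k l : ℕ → ℕ),
    Tendsto u atTop (𝓝 x) ∧
    Tendsto (fun m => k m + l m) atTop atTop ∧
    Tendsto (fun m => (T₁ ^ k m * T₂ ^ l m) (u m)) atTop (𝓝 y)}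

lemma aux_pow₁ (a c : ℂ) (T₁ : lp (fun _ : ℕ => ℂ) ⊤ →L[ℂ] lp (fun _ : ℕ => ℂ) ⊤)
    (hT₁ : ∀ (x : lp (fun _ : ℕ => ℂ) ⊤) (i : ℕ),
      (T₁ x : ∀ _ : ℕ, ℂ) i = (if i = 0 then a else c) * (x : ∀ _ : ℕ, ℂ) i)
    (k : ℕ) (x : lp (fun _ : ℕ => ℂ) ⊤) (i : ℕ) :
    ((T₁ ^ k) x : ∀ _ : ℕ, ℂ) i = (if i = 0 then a else c) ^ k * (x : ∀ _ : ℕ, ℂ) i := by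
  induction k generalizing x with
  | zero => simp
  | succ k ih =>
    rw [pow_succ, ContinuousLinearMap.mul_apply, ih (T₁ x), hT₁, pow_succ]
    ring

lemma aux_pow (a b c : ℂ) (T₁ T₂ : lp (fun _ : ℕ => ℂ) ⊤ →L[ℂ] lp (fun _ : ℕ => ℂ) ⊤)
    (hT₁ : ∀ (x : lp (fun _ : ℕ => ℂ) ⊤) (i : ℕ),
      (T₁ x : ∀ _ : ℕ, ℂ) i = (if i = 0 then a else c) * (x : ∀ _ : ℕ, ℂ) i)
    (hT₂ : ∀ (x : lp (fun _ : ℕ => ℂ) ⊤) (i : ℕ),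
      (T₂ x : ∀ _ : ℕ, ℂ) i = (if i = 0 then b else c) * (x : ∀ _ : ℕ, ℂ) i)
    (k l : ℕ) (x : lp (fun _ : ℕ => ℂ) ⊤) (i : ℕ) :
    ((T₁ ^ k * T₂ ^ l) x : ∀ _ : ℕ, ℂ) i
      = (if i = 0 then a else c) ^ k * ((if i = 0 then b else c) ^ l * (x : ∀ _ : ℕ, ℂ) i) := by
  rw [ContinuousLinearMap.mul_apply, aux_pow₁ a c T₁ hT₁, aux_pow₁ b c T₂ hT₂]

lemma dense_exists (a b : ℂ)
    (hab : Dense {w : ℂ | ∃ k l : ℕ, 0 < k ∧ 0 < l ∧ a ^ k * b ^ l = w})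
    (t : ℂ) {ε : ℝ} (hε : 0 < ε) (N : ℕ) :
    ∃ k l : ℕ, N < k + l ∧ ‖a ^ k * b ^ l - t‖ < ε := by
  set S := {w : ℂ | ∃ k l : ℕ, 0 < k ∧ 0 < l ∧ k + l ≤ N ∧ a ^ k * b ^ l = w} with hSdef
  have hS : S.Finite := by
    apply Set.Finite.subset
      (((Set.finite_Iic N).prod (Set.finite_Iic N)).image fun p : ℕ × ℕ => a ^ p.1 * b ^ p.2)
    rintro w ⟨k, l, hk, hl, hkl, rfl⟩
    exact ⟨(k, l), ⟨le_trans (Nat.le_add_right _ _) hkl, le_trans (Nat.le_add_left _ _) hkl⟩, rfl⟩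
  have hd : Dense ({w : ℂ | ∃ k l : ℕ, 0 < k ∧ 0 < l ∧ a ^ k * b ^ l = w} \ S) :=
    hab.diff_finite hS
  obtain ⟨w, hw, hwb⟩ := hd.exists_mem_open Metric.isOpen_ball ⟨t, Metric.mem_ball_self hε⟩
  obtain ⟨⟨k, l, hk, hl, rfl⟩, hwS⟩ := hw
  refine ⟨k, l, ?_, by rwa [← mem_ball_iff_norm]⟩
  by_contra h
  exact hwS ⟨k, l, hk, hl, Nat.le_of_not_lt h, rfl⟩

set_option maxHeartbeats 800000 in
set_option synthInstance.maxHeartbeats 200000 in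
lemma J_eq_univ (a b c : ℂ)
    (hab : Dense {w : ℂ | ∃ k l : ℕ, 0 < k ∧ 0 < l ∧ a ^ k * b ^ l = w})
    (hc : 1 < ‖c‖)
    (T₁ T₂ : lp (fun _ : ℕ => ℂ) ⊤ →L[ℂ] lp (fun _ : ℕ => ℂ) ⊤)
    (hT₁ : ∀ (x : lp (fun _ : ℕ => ℂ) ⊤) (i : ℕ),
      (T₁ x : ∀ _ : ℕ, ℂ) i = (if i = 0 then a else c) * (x : ∀ _ : ℕ, ℂ) i)
    (hT₂ : ∀ (x : lp (fun _ : ℕ => ℂ) ⊤) (i : ℕ),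
      (T₂ x : ∀ _ : ℕ, ℂ) i = (if i = 0 then b else c) * (x : ∀ _ : ℕ, ℂ) i)
    (x : lp (fun _ : ℕ => ℂ) ⊤)
    (hx : ∀ i : ℕ, i ≠ 0 → (x : ∀ _ : ℕ, ℂ) i = 0) :
    JSetPairOp T₁ T₂ x = Set.univ := by
  have hc0 : c ≠ 0 := by
    intro h; rw [h] at hc; simp at hc; linarith
  have hc1 : (1:ℝ) ≤ ‖c‖ := hc.le
  apply Set.eq_univ_of_forall
  intro y
  classical
  -- the perturbation
  set r : ℕ → ℝ := fun m => 1 / (m + 1) with hrdef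
  have hr : ∀ m, (0:ℝ) < r m := by intro m; positivity
  set x0 : ℂ := (x : ∀ _ : ℕ, ℂ) 0 with hx0def
  set δ : ℕ → ℂ := fun m => if x0 + (r m : ℂ) = 0 then ((2 * r m : ℝ) : ℂ) else ((r m : ℝ) : ℂ)
    with hδdef
  set v : ℕ → ℂ := fun m => x0 + δ m with hvdef
  have hδle : ∀ m, ‖δ m‖ ≤ 2 * r m := by
    intro m
    by_cases h : x0 + (r m : ℂ) = 0
    · simp only [hδdef, if_pos h, Complex.norm_real]
      rw [Real.norm_of_nonneg (by positivity)]
    · simp only [hδdef, if_neg h, Complex.norm_real]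
      rw [Real.norm_of_nonneg (hr m).le]
      linarith [hr m]
  have hv : ∀ m, v m ≠ 0 := by
    intro m
    by_cases h : x0 + (r m : ℂ) = 0
    · simp only [hvdef, hδdef, if_pos h]
      have : x0 + ((2 * r m : ℝ) : ℂ) = (r m : ℂ) := by
        push_cast
        linear_combination h
      rw [this]
      exact_mod_cast (hr m).ne'
    · simpa only [hvdef, hδdef, if_neg h] using h
  -- choose the powers
  have key : ∀ m : ℕ, ∃ k l : ℕ, m < k + l ∧
      ‖a ^ k * b ^ l - (y : ∀ _ : ℕ, ℂ) 0 / v m‖ < 1 / ((m + 1) * (‖v m‖ + 1)) := by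
    intro m
    exact dense_exists a b hab _ (by positivity) m
  choose k l hkl hap using key
  have hklm : Tendsto (fun m => k m + l m) atTop atTop :=
    tendsto_atTop_mono (fun m => (hkl m).le) tendsto_id
  have hklm1 : ∀ m, m + 1 ≤ k m + l m := fun m => hkl m
  -- the approximating sequence
  have hmem : ∀ m : ℕ, Memℓp (fun i : ℕ =>
      if i = 0 then v m else (y : ∀ _ : ℕ, ℂ) i / c ^ (k m + l m)) ⊤ := by
    intro m
    apply memℓp_infty
    refine ⟨max ‖v m‖ ‖y‖, ?_⟩
    rintro s ⟨i, rfl⟩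
    dsimp only
    split_ifs with h
    · exact le_max_left _ _
    · refine le_max_of_le_right ?_
      rw [norm_div]
      refine le_trans (div_le_self (norm_nonneg _) ?_) (lp.norm_apply_le_norm top_ne_zero y i)
      rw [norm_pow]
      exact one_le_pow₀ hc1
  set u : ℕ → lp (fun _ : ℕ => ℂ) ⊤ := fun m => ⟨_, hmem m⟩ with hudef
  have hui : ∀ m i, (u m : ∀ _ : ℕ, ℂ) i =
      if i = 0 then v m else (y : ∀ _ : ℕ, ℂ) i / c ^ (k m + l m) := fun m i => rfl
  refine ⟨u, k, l, ?_, hklm, ?_⟩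
  · -- u → x
    rw [tendsto_iff_norm_sub_tendsto_zero]
    have hb : ∀ m, ‖u m - x‖ ≤ max (2 * r m) (‖y‖ / ‖c‖ ^ (m + 1)) := by
      intro m
      apply lp.norm_le_of_forall_le (le_max_of_le_left (by positivity))
      intro i
      rw [lp.coeFn_sub, Pi.sub_apply, hui]
      by_cases h : i = 0
      · subst h
        rw [if_pos rfl]
        refine le_max_of_le_left ?_
        have : v m - x0 = δ m := by rw [hvdef]; ring
        rw [← hx0def, this]
        exact hδle m
      · rw [if_neg h, hx i h, sub_zero, norm_div, norm_pow]
        refine le_max_of_le_right ?_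
        apply div_le_div₀ (norm_nonneg y) (lp.norm_apply_le_norm top_ne_zero y i)
          (by positivity)
        exact pow_le_pow_right₀ hc1 (hklm1 m)
    refine squeeze_zero (fun m => norm_nonneg _) hb ?_
    have h1 : Tendsto (fun m : ℕ => 2 * r m) atTop (𝓝 0) := by
      have := tendsto_one_div_add_atTop_nhds_zero_nat (𝕜 := ℝ)
      simpa [hrdef, one_div] using this.const_mul (2:ℝ)
    have h2 : Tendsto (fun m : ℕ => ‖y‖ / ‖c‖ ^ (m + 1)) atTop (𝓝 0) := by
      apply Tendsto.div_atTop tendsto_const_nhds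
      exact (tendsto_pow_atTop_atTop_of_one_lt hc).comp (tendsto_add_atTop_nat 1)
    simpa using h1.max h2
  · -- images → y
    rw [tendsto_iff_norm_sub_tendsto_zero]
    have hb : ∀ m, ‖(T₁ ^ k m * T₂ ^ l m) (u m) - y‖ ≤ r m := by
      intro m
      apply lp.norm_le_of_forall_le (hr m).le
      intro i
      rw [lp.coeFn_sub, Pi.sub_apply, aux_pow a b c T₁ T₂ hT₁ hT₂, hui]
      by_cases h : i = 0
      · subst h
        simp only [if_pos rfl]
        have hy0 : (y : ∀ _ : ℕ, ℂ) 0 = ((y : ∀ _ : ℕ, ℂ) 0 / v m) * v m :=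
          (div_mul_cancel₀ _ (hv m)).symm
        calc ‖a ^ k m * (b ^ l m * v m) - (y : ∀ _ : ℕ, ℂ) 0‖
            = ‖(a ^ k m * b ^ l m - (y : ∀ _ : ℕ, ℂ) 0 / v m) * v m‖ := by
              rw [sub_mul, ← hy0]; ring_nf
          _ = ‖a ^ k m * b ^ l m - (y : ∀ _ : ℕ, ℂ) 0 / v m‖ * ‖v m‖ := norm_mul _ _
          _ ≤ (1 / ((m + 1) * (‖v m‖ + 1))) * (‖v m‖ + 1) := by
              apply mul_le_mul (hap m).le (by linarith [norm_nonneg (v m)]) (norm_nonneg _)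
                (by positivity)
          _ = r m := by rw [hrdef]; field_simp
      · simp only [if_neg h]
        rw [← mul_assoc, ← pow_add, mul_comm (c ^ (k m + l m)),
          div_mul_cancel₀ _ (pow_ne_zero _ hc0), sub_self, norm_zero]
        exact (hr m).le
    refine squeeze_zero (fun m => norm_nonneg _) hb ?_
    simpa [hrdef] using tendsto_one_div_add_atTop_nhds_zero_nat (𝕜 := ℝ)

set_option maxHeartbeats 800000 in
set_option synthInstance.maxHeartbeats 200000 in
lemma J_forward (a b c : ℂ) (hc : 1 < ‖c‖)
    (T₁ T₂ : lp (fun _ : ℕ => ℂ) ⊤ →L[ℂ] lp (fun _ : ℕ => ℂ) ⊤)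
    (hT₁ : ∀ (x : lp (fun _ : ℕ => ℂ) ⊤) (i : ℕ),
      (T₁ x : ∀ _ : ℕ, ℂ) i = (if i = 0 then a else c) * (x : ∀ _ : ℕ, ℂ) i)
    (hT₂ : ∀ (x : lp (fun _ : ℕ => ℂ) ⊤) (i : ℕ),
      (T₂ x : ∀ _ : ℕ, ℂ) i = (if i = 0 then b else c) * (x : ∀ _ : ℕ, ℂ) i)
    (x : lp (fun _ : ℕ => ℂ) ⊤) (hJ : JSetPairOp T₁ T₂ x = Set.univ)
    (i : ℕ) (hi : i ≠ 0) : (x : ∀ _ : ℕ, ℂ) i = 0 := by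
  by_contra hxi
  have h0 : (0 : lp (fun _ : ℕ => ℂ) ⊤) ∈ JSetPairOp T₁ T₂ x := by
    rw [hJ]; trivial
  obtain ⟨u, k, l, hu, hkl, hA⟩ := h0
  have hui : Tendsto (fun m => (u m : ∀ _ : ℕ, ℂ) i) atTop (𝓝 ((x : ∀ _ : ℕ, ℂ) i)) := by
    rw [tendsto_iff_norm_sub_tendsto_zero] at hu ⊢
    refine squeeze_zero (fun m => norm_nonneg _) (fun m => ?_) hu
    have : (u m : ∀ _ : ℕ, ℂ) i - (x : ∀ _ : ℕ, ℂ) i = ((u m - x : lp (fun _ : ℕ => ℂ) ⊤) : ∀ _ : ℕ, ℂ) i := by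
      rw [lp.coeFn_sub, Pi.sub_apply]
    rw [this]
    exact lp.norm_apply_le_norm top_ne_zero _ i
  have h1 : Tendsto (fun m => ‖(u m : ∀ _ : ℕ, ℂ) i‖) atTop (𝓝 ‖(x : ∀ _ : ℕ, ℂ) i‖) :=
    hui.norm
  have h2 : Tendsto (fun m => ‖((T₁ ^ k m * T₂ ^ l m) (u m) : ∀ _ : ℕ, ℂ) i‖) atTop (𝓝 0) := by
    refine squeeze_zero (fun m => norm_nonneg _)
      (fun m => lp.norm_apply_le_norm top_ne_zero _ i) ?_
    simpa using hA.norm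
  have h3 : Tendsto (fun m => ‖((T₁ ^ k m * T₂ ^ l m) (u m) : ∀ _ : ℕ, ℂ) i‖) atTop atTop := by
    have heq : ∀ m, ‖((T₁ ^ k m * T₂ ^ l m) (u m) : ∀ _ : ℕ, ℂ) i‖
        = ‖c‖ ^ (k m + l m) * ‖(u m : ∀ _ : ℕ, ℂ) i‖ := by
      intro m
      rw [aux_pow a b c T₁ T₂ hT₁ hT₂]
      simp only [if_neg hi]
      rw [norm_mul, norm_mul, norm_pow, norm_pow, ← mul_assoc, ← pow_add]
    simp only [heq]
    exact Tendsto.atTop_mul_pos (norm_pos_iff.mpr hxi)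
      ((tendsto_pow_atTop_atTop_of_one_lt hc).comp hkl) h1
  exact not_tendsto_atTop_of_tendsto_nhds h2 h3

set_option maxHeartbeats 800000 in
set_option synthInstance.maxHeartbeats 200000 in
lemma not_transitive (a b c : ℂ) (hc : 1 < ‖c‖)
    (T₁ T₂ : lp (fun _ : ℕ => ℂ) ⊤ →L[ℂ] lp (fun _ : ℕ => ℂ) ⊤)
    (hT₁ : ∀ (x : lp (fun _ : ℕ => ℂ) ⊤) (i : ℕ),
      (T₁ x : ∀ _ : ℕ, ℂ) i = (if i = 0 then a else c) * (x : ∀ _ : ℕ, ℂ) i)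
    (hT₂ : ∀ (x : lp (fun _ : ℕ => ℂ) ⊤) (i : ℕ),
      (T₂ x : ∀ _ : ℕ, ℂ) i = (if i = 0 then b else c) * (x : ∀ _ : ℕ, ℂ) i) :
    ∃ U V : Set (lp (fun _ : ℕ => ℂ) ⊤), IsOpen U ∧ IsOpen V ∧
        U.Nonempty ∧ V.Nonempty ∧
        ∀ k l : ℕ, ∀ x ∈ U, (T₁ ^ k * T₂ ^ l) x ∉ V := by
  classical
  set e₁ : lp (fun _ : ℕ => ℂ) ⊤ := lp.single ⊤ 1 (1 : ℂ) with he₁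
  refine ⟨Metric.ball e₁ (1/2), Metric.ball 0 (1/4), Metric.isOpen_ball, Metric.isOpen_ball,
    ⟨e₁, Metric.mem_ball_self (by norm_num)⟩, ⟨0, Metric.mem_ball_self (by norm_num)⟩, ?_⟩
  intro k l x hx hV
  rw [Metric.mem_ball, dist_eq_norm] at hx
  rw [Metric.mem_ball, dist_zero_right] at hV
  have hx1 : (1:ℝ) / 2 ≤ ‖(x : ∀ _ : ℕ, ℂ) 1‖ := by
    have h1 : ‖(x : ∀ _ : ℕ, ℂ) 1 - 1‖ < 1/2 := by
      have := lp.norm_apply_le_norm (E := fun _ : ℕ => ℂ) top_ne_zero (x - e₁) 1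
      have he : ((x - e₁ : lp (fun _ : ℕ => ℂ) ⊤) : ∀ _ : ℕ, ℂ) 1
          = (x : ∀ _ : ℕ, ℂ) 1 - 1 := by
        rw [lp.coeFn_sub, Pi.sub_apply, he₁, lp.single_apply_self]
      rw [he] at this
      linarith
    have := norm_sub_norm_le (1 : ℂ) ((x : ∀ _ : ℕ, ℂ) 1)
    rw [norm_one, norm_sub_rev] at this
    linarith
  have hnorm : (1:ℝ)/2 ≤ ‖(T₁ ^ k * T₂ ^ l) x‖ := by
    refine le_trans ?_ (lp.norm_apply_le_norm top_ne_zero ((T₁ ^ k * T₂ ^ l) x) 1)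
    rw [aux_pow a b c T₁ T₂ hT₁ hT₂]
    simp only [if_neg (one_ne_zero)]
    rw [norm_mul, norm_mul, norm_pow, norm_pow]
    have h1 : (1:ℝ) ≤ ‖c‖ ^ k := one_le_pow₀ hc.le
    have h2 : (1:ℝ) ≤ ‖c‖ ^ l := one_le_pow₀ hc.le
    calc (1:ℝ)/2 ≤ ‖(x : ∀ _ : ℕ, ℂ) 1‖ := hx1
      _ = 1 * (1 * ‖(x : ∀ _ : ℕ, ℂ) 1‖) := by ring
      _ ≤ ‖c‖ ^ k * (‖c‖ ^ l * ‖(x : ∀ _ : ℕ, ℂ) 1‖) := by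
          apply mul_le_mul h1 ?_ (by positivity) (by positivity)
          apply mul_le_mul h2 le_rfl (norm_nonneg _) (by positivity)
  linarith

/-- Let `a, b, c ∈ ℂ` with `{a^k b^l : k, l ∈ ℕ}` dense in `ℂ` and `|c| > 1`, and let
`T₁, T₂` be the diagonal operators on `ℓ^∞(ℕ)` given by
`T₁(x₁,x₂,x₃,…) = (a x₁, c x₂, c x₃, …)` and `T₂(x₁,x₂,x₃,…) = (b x₁, c x₂, c x₃, …)`.
Then `{x : J_{(T₁,T₂)}(x) = ℓ^∞(ℕ)} = {(x₁,0,0,…)}`, so `(T₁,T₂)` is a locally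
topologically transitive pair; moreover `(T₁,T₂)` is not topologically transitive. -/
theorem lp_infty_diagonal_pair_locally_transitive_not_transitive
    (a b c : ℂ)
    (hab : Dense {w : ℂ | ∃ k l : ℕ, 0 < k ∧ 0 < l ∧ a ^ k * b ^ l = w})
    (hc : 1 < ‖c‖)
    (T₁ T₂ : lp (fun _ : ℕ => ℂ) ⊤ →L[ℂ] lp (fun _ : ℕ => ℂ) ⊤)
    (hT₁ : ∀ (x : lp (fun _ : ℕ => ℂ) ⊤) (i : ℕ),
      (T₁ x : ∀ _ : ℕ, ℂ) i = (if i = 0 then a else c) * (x : ∀ _ : ℕ, ℂ) i)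
    (hT₂ : ∀ (x : lp (fun _ : ℕ => ℂ) ⊤) (i : ℕ),
      (T₂ x : ∀ _ : ℕ, ℂ) i = (if i = 0 then b else c) * (x : ∀ _ : ℕ, ℂ) i) :
    ({x : lp (fun _ : ℕ => ℂ) ⊤ | JSetPairOp T₁ T₂ x = Set.univ}
        = {x : lp (fun _ : ℕ => ℂ) ⊤ | ∀ i : ℕ, i ≠ 0 → (x : ∀ _ : ℕ, ℂ) i = 0}) ∧
    (∃ x : lp (fun _ : ℕ => ℂ) ⊤, x ≠ 0 ∧ JSetPairOp T₁ T₂ x = Set.univ) ∧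
    (∃ U V : Set (lp (fun _ : ℕ => ℂ) ⊤), IsOpen U ∧ IsOpen V ∧
        U.Nonempty ∧ V.Nonempty ∧
        ∀ k l : ℕ, ∀ x ∈ U, (T₁ ^ k * T₂ ^ l) x ∉ V) := by
  have hc' : 1 < ‖c‖ := hc
  have hset : {x : lp (fun _ : ℕ => ℂ) ⊤ | JSetPairOp T₁ T₂ x = Set.univ}
      = {x : lp (fun _ : ℕ => ℂ) ⊤ | ∀ i : ℕ, i ≠ 0 → (x : ∀ _ : ℕ, ℂ) i = 0} := by
    ext x
    simp only [Set.mem_setOf_eq]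
    exact ⟨fun h i hi => J_forward a b c hc' T₁ T₂ hT₁ hT₂ x h i hi,
      fun h => J_eq_univ a b c hab hc' T₁ T₂ hT₁ hT₂ x h⟩
  refine ⟨hset, ?_, not_transitive a b c hc' T₁ T₂ hT₁ hT₂⟩
  classical
  refine ⟨lp.single ⊤ 0 (1 : ℂ), ?_, J_eq_univ a b c hab hc' T₁ T₂ hT₁ hT₂ _ ?_⟩
  · intro h
    have h1 : (lp.single ⊤ 0 (1 : ℂ) : ∀ _ : ℕ, ℂ) 0 = 1 := lp.single_apply_self ⊤ 0 1
    rw [h] at h1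
    simp only [lp.coeFn_zero, Pi.zero_apply] at h1
    exact one_ne_zero h1.symm
  · intro i hi
    exact lp.single_apply_ne ⊤ 0 1 hi
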